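/- Let n ≥ 3, x₀ ∈ ℝⁿ, R > 0, and define u(x) = (R/(|x - x₀|² - R²))^{(n-2)/2} for x ∈ ℝⁿ with |x - x₀| > R. Then A^u(x) = -2 I for all such x. -/

import Mathlib

open Real Matrix Filter

noncomputable def pgrad (n : ℕ) (u : EuclideanSpace ℝ (Fin n) → ℝ)
    (x : EuclideanSpace ℝ (Fin n)) (i : Fin n) : ℝ :=
  fderiv ℝ u x (EuclideanSpace.single i 1)

noncomputable def phess (n : ℕ) (u : EuclideanSpace ℝ (Fin n) → ℝ)
    (x : EuclideanSpace ℝ (Fin n)) (i j : Fin n) : ℝ :=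
  fderiv ℝ (fun y => fderiv ℝ u y (EuclideanSpace.single j 1)) x (EuclideanSpace.single i 1)

/-- The conformal Hessian `A^u` of a positive function `u`. -/
noncomputable def confHess (n : ℕ) (u : EuclideanSpace ℝ (Fin n) → ℝ)
    (x : EuclideanSpace ℝ (Fin n)) : Matrix (Fin n) (Fin n) ℝ :=
  Matrix.of fun i j =>
    -(2 / ((n : ℝ) - 2)) * (u x) ^ (-(((n : ℝ) + 2) / ((n : ℝ) - 2))) * phess n u x i j
    + (2 * (n : ℝ) / ((n : ℝ) - 2) ^ 2) * (u x) ^ (-(2 * (n : ℝ) / ((n : ℝ) - 2))) *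
        pgrad n u x i * pgrad n u x j
    - (2 / ((n : ℝ) - 2) ^ 2) * (u x) ^ (-(2 * (n : ℝ) / ((n : ℝ) - 2))) *
        (∑ k, (pgrad n u x k) ^ 2) * (if i = j then (1 : ℝ) else 0)

/-!
Substituting `u = w ^ (-(n - 2) / 2)` turns the conformal Hessian into
`A^u = w ∇²w - ½ |∇w|² I`. Outside the ball, `u = w ^ (-(n - 2) / 2)` with
`w(y) = (|y - x₀|² - R²) / R`, whose gradient is `2 (y - x₀) / R` and whose Hessian is `(2 / R) I`,
so `A^u = (2 (|x - x₀|² - R²) - 2 |x - x₀|²) / R² · I = -2 I`.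
-/

namespace Filter.EventuallyEq

variable {n : ℕ} {u v : EuclideanSpace ℝ (Fin n) → ℝ} {x : EuclideanSpace ℝ (Fin n)}

theorem pgrad_eq (h : u =ᶠ[nhds x] v) : pgrad n u x = pgrad n v x := by
  unfold pgrad
  rw [h.fderiv_eq]

theorem phess_eq (h : u =ᶠ[nhds x] v) : phess n u x = phess n v x := by
  have hj : ∀ j, (fun y => fderiv ℝ u y (EuclideanSpace.single j 1)) =ᶠ[nhds x]
      fun y => fderiv ℝ v y (EuclideanSpace.single j 1) := fun j =>
    (h.fderiv (𝕜 := ℝ)).mono fun y hy => by simp only [hy]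
  ext i j
  rw [phess, phess, (hj j).fderiv_eq]

theorem confHess_eq (h : u =ᶠ[nhds x] v) : confHess n u x = confHess n v x := by
  simp only [confHess, h.eq_of_nhds, h.pgrad_eq, h.phess_eq]

end Filter.EventuallyEq

section Rpow

variable {n : ℕ} {w : EuclideanSpace ℝ (Fin n) → ℝ} {x : EuclideanSpace ℝ (Fin n)}

theorem pgrad_rpow_const (hw : DifferentiableAt ℝ w x) (hx : w x ≠ 0) (a : ℝ) (i : Fin n) :
    pgrad n (fun y => w y ^ a) x i = a * w x ^ (a - 1) * pgrad n w x i := by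
  simp [pgrad, (hw.hasFDerivAt.rpow_const (p := a) (Or.inl hx)).fderiv]

theorem phess_rpow_const (hw : ContDiffAt ℝ 2 w x) (hx : w x ≠ 0) (a : ℝ) (i j : Fin n) :
    phess n (fun y => w y ^ a) x i j = a * ((a - 1) * w x ^ (a - 2) * pgrad n w x i *
      pgrad n w x j + w x ^ (a - 1) * phess n w x i j) := by
  have hgrad : (fun y => fderiv ℝ (fun y => w y ^ a) y (EuclideanSpace.single j 1)) =ᶠ[nhds x]
      fun y => a * (w y ^ (a - 1) * fderiv ℝ w y (EuclideanSpace.single j 1)) := by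
    filter_upwards [(hw.eventually (by simp)).and (hw.continuousAt.eventually_ne hx)]
      with y ⟨hwy, hy⟩
    exact (pgrad_rpow_const (hwy.differentiableAt (by simp)) hy a j).trans (mul_assoc _ _ _)
  have hpow := hw.differentiableAt (by simp) |>.hasFDerivAt.rpow_const (p := a - 1) (Or.inl hx)
  have hdw : DifferentiableAt ℝ (fderiv ℝ w) x :=
    (hw.fderiv_right (m := 1) (by norm_num)).differentiableAt one_ne_zero
  have hdwj := (hdw.clm_apply (differentiableAt_const (EuclideanSpace.single j 1))).hasFDerivAt
  have hprod : HasFDerivAt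
      (fun y => a * (w y ^ (a - 1) * fderiv ℝ w y (EuclideanSpace.single j 1))) _ x :=
    (hpow.mul hdwj).const_mul a
  rw [phess, hgrad.fderiv_eq, hprod.fderiv]
  simp only [phess, pgrad, _root_.add_apply, _root_.smul_apply, smul_eq_mul, sub_sub,
    one_add_one_eq_two]
  ring

theorem confHess_rpow_neg (hn : n ≠ 2) (hw : ContDiffAt ℝ 2 w x) (hx : 0 < w x) :
    confHess n (fun y => w y ^ (-(((n : ℝ) - 2) / 2))) x =
      w x • Matrix.of (phess n w x) - ((∑ k, pgrad n w x k ^ 2) / 2) • 1 := by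
  have hdw : DifferentiableAt ℝ w x := hw.differentiableAt (by simp)
  have hn2 : (n : ℝ) - 2 ≠ 0 := sub_ne_zero.mpr (by exact_mod_cast hn)
  set k := ((n : ℝ) - 2) / 2 with hk
  have hk0 : k ≠ 0 := by rw [hk]; exact div_ne_zero hn2 two_ne_zero
  have hn_eq : (n : ℝ) = 2 * k + 2 := by rw [hk]; ring
  -- every power of `w x` is expressed through `w x ^ (-k)` and integer powers of `w x`
  have e1 : (w x ^ (-k)) ^ (-(((n : ℝ) + 2) / ((n : ℝ) - 2))) = w x ^ 2 / w x ^ (-k) := by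
    rw [← rpow_mul hx.le, ← rpow_two, ← rpow_sub hx]
    congr 1
    field_simp
    ring
  have e2 : (w x ^ (-k)) ^ (-(2 * (n : ℝ) / ((n : ℝ) - 2))) =
      w x ^ 2 / w x ^ (-k) / w x ^ (-k) := by
    rw [← rpow_mul hx.le, ← rpow_two, ← rpow_sub hx, ← rpow_sub hx]
    congr 1
    field_simp
    ring
  have e3 : w x ^ (-k - 1) = w x ^ (-k) / w x := rpow_sub_one hx.ne' _
  have e4 : w x ^ (-k - 2) = w x ^ (-k) / w x ^ 2 := by rw [← rpow_two, ← rpow_sub hx]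
  have hW : 0 < w x ^ (-k) := rpow_pos_of_pos hx _
  ext i j
  simp only [confHess, Matrix.of_apply, pgrad_rpow_const hdw hx.ne', phess_rpow_const hw hx.ne',
    Matrix.sub_apply, Matrix.smul_apply, Matrix.one_apply, smul_eq_mul]
  rw [e1, e2, e3, e4]
  generalize w x ^ (-k) = W at hW ⊢
  have hsum : ∑ l, (-k * (W / w x) * pgrad n w x l) ^ 2 =
      (k * W / w x) ^ 2 * ∑ l, pgrad n w x l ^ 2 := by
    rw [Finset.mul_sum]
    congr 1 with l
    ring
  rw [hsum, hn_eq, add_sub_cancel_right]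
  clear_value k
  split_ifs <;> field_simp <;> ring

end Rpow

section Quadratic

variable {n : ℕ} (x₀ : EuclideanSpace ℝ (Fin n)) (a b : ℝ)

theorem contDiff_mul_norm_sub_sq_sub {m : WithTop ℕ∞} :
    ContDiff ℝ m fun z => a * ‖z - x₀‖ ^ 2 - b :=
  (contDiff_const.mul ((contDiff_norm_sq ℝ).comp (contDiff_id.sub contDiff_const))).sub
    contDiff_const

theorem hasFDerivAt_mul_norm_sub_sq_sub (y : EuclideanSpace ℝ (Fin n)) :
    HasFDerivAt (fun z => a * ‖z - x₀‖ ^ 2 - b) ((2 * a) • innerSL ℝ (y - x₀)) y := by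
  refine ((((hasFDerivAt_id y).sub_const x₀).norm_sq.const_mul a).sub_const b).congr_fderiv ?_
  ext v
  simp only [id_eq, map_sub, ContinuousLinearMap.comp_id, _root_.smul_apply, _root_.sub_apply,
    coe_innerSL_apply, nsmul_eq_mul, Nat.cast_ofNat, smul_eq_mul]
  ring

theorem pgrad_mul_norm_sub_sq_sub (y : EuclideanSpace ℝ (Fin n)) (i : Fin n) :
    pgrad n (fun z => a * ‖z - x₀‖ ^ 2 - b) y i = 2 * a * (y - x₀) i := by
  rw [pgrad, (hasFDerivAt_mul_norm_sub_sq_sub x₀ a b y).fderiv, _root_.smul_apply,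
    innerSL_apply_apply, EuclideanSpace.inner_single_right]
  simp [mul_assoc]

theorem phess_mul_norm_sub_sq_sub (y : EuclideanSpace ℝ (Fin n)) :
    Matrix.of (phess n (fun z => a * ‖z - x₀‖ ^ 2 - b) y) = (2 * a) • 1 := by
  ext i j
  have hgrad : (fun z => fderiv ℝ (fun z => a * ‖z - x₀‖ ^ 2 - b) z (EuclideanSpace.single j 1)) =
      fun z => 2 * a * EuclideanSpace.proj (𝕜 := ℝ) j (z - x₀) :=
    funext fun z => pgrad_mul_norm_sub_sq_sub x₀ a b z j
  have hderiv : HasFDerivAt (fun z => 2 * a * EuclideanSpace.proj (𝕜 := ℝ) j (z - x₀)) _ y :=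
    ((EuclideanSpace.proj (𝕜 := ℝ) j).hasFDerivAt.comp y (hasFDerivAt_sub_const x₀)).const_mul _
  rw [Matrix.of_apply, phess, hgrad, hderiv.fderiv]
  simp [Matrix.one_apply, eq_comm]

end Quadratic

/-- for `u(x) = (R/(|x-x₀|² - R²))^{(n-2)/2}` outside `B_R(x₀)`, `A^u ≡ -2 I`. -/
theorem confHess_canonical_exterior
    (n : ℕ) (hn : 3 ≤ n) (x₀ : EuclideanSpace ℝ (Fin n)) (R : ℝ) (hR : 0 < R) :
    ∀ x : EuclideanSpace ℝ (Fin n), R < ‖x - x₀‖ →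
      confHess n (fun y => (R / (‖y - x₀‖ ^ 2 - R ^ 2)) ^ (((n : ℝ) - 2) / 2)) x
        = (-2 : ℝ) • (1 : Matrix (Fin n) (Fin n) ℝ) := by
  intro x hx
  have hpos : ∀ y : EuclideanSpace ℝ (Fin n), R < ‖y - x₀‖ → 0 < R⁻¹ * ‖y - x₀‖ ^ 2 - R := by
    intro y hy
    rw [sub_pos, inv_mul_eq_div, lt_div_iff₀ hR]
    nlinarith
  have hu : (fun y => (R / (‖y - x₀‖ ^ 2 - R ^ 2)) ^ (((n : ℝ) - 2) / 2)) =ᶠ[nhds x]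
      fun y => (R⁻¹ * ‖y - x₀‖ ^ 2 - R) ^ (-(((n : ℝ) - 2) / 2)) := by
    have hext : IsOpen {y : EuclideanSpace ℝ (Fin n) | R < ‖y - x₀‖} :=
      isOpen_lt continuous_const (continuous_id.sub continuous_const).norm
    filter_upwards [hext.mem_nhds hx] with y hy
    rw [rpow_neg (hpos y hy).le, ← inv_rpow (hpos y hy).le]
    congr 1
    field_simp
  rw [hu.confHess_eq, confHess_rpow_neg (by omega) (contDiff_mul_norm_sub_sq_sub x₀ _ _).contDiffAt
    (hpos x hx), phess_mul_norm_sub_sq_sub]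
  simp only [pgrad_mul_norm_sub_sq_sub, mul_pow, ← Finset.mul_sum, ← EuclideanSpace.real_norm_sq_eq,
    smul_smul, ← sub_smul]
  congr 1
  field_simp
  ring
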